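/- Let M be a 2×2 real matrix with entries M11, M12, M21, M22, let D1 > 0, D2 > 0, and assume det M > 0. Then there exists a real k > 0 with det M(k) < 0 (where M(k) = M − k²·diag(D1, D2)) if and only if M11·D2 + M22·D1 > 2·√(D1·D2·det M). -/

import Mathlib

/-!
With `t = k²`, `det M(k)` is the quadratic `D1 D2 t² - (M11 D2 + M22 D1) t + det M`. By AM-GM,
`D1 D2 t² + det M ≥ 2 √(D1 D2 det M) t` for `t > 0`, so the quadratic can only be negative if
`M11 D2 + M22 D1 > 2 √(D1 D2 det M)`; conversely, under that inequality the quadratic is negative at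
its vertex `t = (M11 D2 + M22 D1) / (2 D1 D2) > 0`.
-/

open Real

theorem Matrix.det_fin_two_of_sub_mul_diagonal {R : Type*} [CommRing R] (M11 M12 M21 M22 D1 D2 t : R) :
    !![M11 - D1 * t, M12; M21, M22 - D2 * t].det
      = D1 * D2 * t ^ 2 - (M11 * D2 + M22 * D1) * t + !![M11, M12; M21, M22].det := by
  simp only [Matrix.det_fin_two_of]
  ring

theorem exists_pos_sq_iff_exists_pos (P : ℝ → Prop) :
    (∃ k : ℝ, 0 < k ∧ P (k ^ 2)) ↔ ∃ t : ℝ, 0 < t ∧ P t := by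
  constructor
  · rintro ⟨k, hk, hP⟩
    exact ⟨k ^ 2, by positivity, hP⟩
  · rintro ⟨t, ht, hP⟩
    exact ⟨√t, sqrt_pos.mpr ht, by rwa [sq_sqrt ht.le]⟩

theorem two_mul_sqrt_mul_le_quadratic {a d : ℝ} (ha : 0 ≤ a) (hd : 0 ≤ d) (t : ℝ) :
    2 * √(a * d) * t ≤ a * t ^ 2 + d := by
  have amgm := two_mul_le_add_sq (√a * t) (√d)
  rw [mul_pow, sq_sqrt ha, sq_sqrt hd] at amgm
  rw [sqrt_mul ha]
  linarith

theorem exists_pos_quadratic_neg_iff {a b d : ℝ} (ha : 0 < a) (hd : 0 ≤ d) :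
    (∃ t : ℝ, 0 < t ∧ a * t ^ 2 - b * t + d < 0) ↔ 2 * √(a * d) < b := by
  constructor
  · rintro ⟨t, ht, hneg⟩
    have := two_mul_sqrt_mul_le_quadratic ha.le hd t
    exact lt_of_mul_lt_mul_right (by linarith) ht.le
  · intro hb
    have hb_pos : 0 < b := (mul_nonneg zero_le_two (sqrt_nonneg _)).trans_lt hb
    have hdisc : 4 * a * d < b ^ 2 := by
      have := sq_sqrt (mul_nonneg ha.le hd)
      nlinarith [sqrt_nonneg (a * d)]
    refine ⟨b / (2 * a), by positivity, ?_⟩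
    have hvertex : a * (b / (2 * a)) ^ 2 - b * (b / (2 * a)) + d = (4 * a * d - b ^ 2) / (4 * a) := by
      field_simp
      ring
    rw [hvertex]
    exact div_neg_of_neg_of_pos (by linarith) (by positivity)

/-- Let `M` be a 2×2 real matrix with entries `M11, M12, M21, M22`, `D1 > 0`, `D2 > 0` and
`det M > 0`. There exists `k > 0` with `det (M − k²·diag(D1,D2)) < 0` if and only if
`M11·D2 + M22·D1 > 2·√(D1·D2·det M)`. -/
theorem turing_instability_iff (M11 M12 M21 M22 D1 D2 : ℝ)
    (hD1 : 0 < D1) (hD2 : 0 < D2)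
    (hdet : 0 < (!![M11, M12; M21, M22] : Matrix (Fin 2) (Fin 2) ℝ).det) :
    (∃ k : ℝ, 0 < k ∧
        (!![M11 - D1 * k ^ 2, M12; M21, M22 - D2 * k ^ 2] : Matrix (Fin 2) (Fin 2) ℝ).det < 0)
      ↔ M11 * D2 + M22 * D1 >
          2 * Real.sqrt (D1 * D2 * (!![M11, M12; M21, M22] : Matrix (Fin 2) (Fin 2) ℝ).det) := by
  simp only [Matrix.det_fin_two_of_sub_mul_diagonal]
  rw [exists_pos_sq_iff_exists_pos
    (fun t => D1 * D2 * t ^ 2 - (M11 * D2 + M22 * D1) * t + !![M11, M12; M21, M22].det < 0)]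
  exact exists_pos_quadratic_neg_iff (mul_pos hD1 hD2) hdet.le
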